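/- If Ψ and Ψ' are strictly convex piecewise linear functions adapted to two complete quasifans Σ and Σ' in ℚ^n respectively, then for a suitable positive scaling the function Ψ + λΨ' is strictly convex with respect to the intersection quasifan {σ ∩ σ' : σ ∈ Σ, σ' ∈ Σ'}. In particular, the intersection of two finite projective quasifans is a projective quasifan. -/

import Mathlib

/-- The finitely generated convex cone on a set `T`: all nonnegative rational
combinations of elements of `T`. -/
def ConeGen {V : Type*} [AddCommGroup V] [Module ℚ V] (T : Set V) : Set V :=
  {x | ∃ (s : Finset V) (c : V → ℚ), ↑s ⊆ T ∧ (∀ v, 0 ≤ c v) ∧ x = ∑ v ∈ s, c v • v}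

/-- A (rational) polyhedral cone: the cone generated by finitely many vectors. -/
def IsPolyCone {V : Type*} [AddCommGroup V] [Module ℚ V] (σ : Set V) : Prop :=
  ∃ T : Finset V, σ = ConeGen (↑T : Set V)

/-- A cone is strongly convex if it contains no line. -/
def IsStronglyConvex {V : Type*} [AddCommGroup V] [Module ℚ V] (σ : Set V) : Prop :=
  ∀ x ∈ σ, -x ∈ σ → x = 0

/-- The dimension of a cone: the dimension of its linear span. -/
noncomputable def coneDim {V : Type*} [AddCommGroup V] [Module ℚ V] (σ : Set V) : ℕ :=
  Module.finrank ℚ (Submodule.span ℚ σ)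

/-- `τ` is a face of `σ`: the intersection of `σ` with a supporting hyperplane
(including `σ` itself, via the zero functional). -/
def IsFace {V : Type*} [AddCommGroup V] [Module ℚ V] (σ τ : Set V) : Prop :=
  ∃ m : V →ₗ[ℚ] ℚ, (∀ x ∈ σ, 0 ≤ m x) ∧ τ = σ ∩ {x | m x = 0}

/-- `τ` is a facet of `σ`: a face of dimension one less. -/
def IsFacet {V : Type*} [AddCommGroup V] [Module ℚ V] (σ τ : Set V) : Prop :=
  IsFace σ τ ∧ coneDim τ + 1 = coneDim σ

/-- A quasifan: a finite collection of (not necessarily strongly) convex rational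
polyhedral cones, closed under taking facets, such that the intersection of any two
cones is a face of each. -/
def IsQuasifan {V : Type*} [AddCommGroup V] [Module ℚ V] (F : Set (Set V)) : Prop :=
  F.Finite ∧ (∀ σ ∈ F, IsPolyCone σ) ∧
  (∀ σ ∈ F, ∀ τ, IsFacet σ τ → τ ∈ F) ∧
  (∀ σ ∈ F, ∀ σ' ∈ F, IsFace σ (σ ∩ σ') ∧ IsFace σ' (σ ∩ σ'))

/-- A collection of cones is complete if it covers the whole space. -/
def IsCompleteFan {V : Type*} [AddCommGroup V] [Module ℚ V] (F : Set (Set V)) : Prop :=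
  ⋃₀ F = Set.univ

/-- `Ψ` is piecewise linear with respect to `F`: linear on each cone of `F`. -/
def IsPLOn {V : Type*} [AddCommGroup V] [Module ℚ V] (F : Set (Set V)) (Ψ : V → ℚ) : Prop :=
  ∀ σ ∈ F, ∃ ℓ : V →ₗ[ℚ] ℚ, ∀ x ∈ σ, Ψ x = ℓ x

/-- `Ψ` is a strictly convex piecewise linear function adapted to `F`: it is linear on
each cone, and for each maximal cone the linear piece lies strictly below `Ψ` away
from that cone. -/
def IsStrictlyConvexPLOn {V : Type*} [AddCommGroup V] [Module ℚ V]
    (F : Set (Set V)) (Ψ : V → ℚ) : Prop :=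
  IsPLOn F Ψ ∧ ∀ σ ∈ F, Maximal (· ∈ F) σ →
    ∃ ℓ : V →ₗ[ℚ] ℚ, (∀ x ∈ σ, Ψ x = ℓ x) ∧ ∀ x ∉ σ, ℓ x < Ψ x

/-- A quasifan is projective if it admits a strictly convex piecewise linear function. -/
def IsProjectiveFan {V : Type*} [AddCommGroup V] [Module ℚ V] (F : Set (Set V)) : Prop :=
  ∃ Ψ : V → ℚ, IsStrictlyConvexPLOn F Ψ

/-!
Over the intersection fan, `Ψ + Ψ'` is strictly convex, so `λ = 1` works: a maximal cone of the
intersection fan is `σ ∩ σ'` with `σ`, `σ'` maximal, and the sum of the linear pieces of `Ψ` on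
`σ` and of `Ψ'` on `σ'` lies below `Ψ + Ψ'`, strictly so off `σ ∩ σ'`.

That the intersections form a quasifan is polyhedral geometry. By Minkowski–Weyl (via
Fourier–Motzkin elimination) an intersection of polyhedral cones is polyhedral, and by Farkas'
lemma a functional that is nonnegative on `σ ∩ σ'` is the sum of one nonnegative on `σ` and one
nonnegative on `σ'`; hence every face of `σ ∩ σ'` is the intersection of a face of `σ` with a face
of `σ'`. Closure under facets gives closure under all faces, because every proper face lies in a
facet: a maximal proper face is a facet, since otherwise tilting its supporting functional would
produce a larger proper face.
-/

namespace PointedCone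

variable {𝕜 M N : Type*} [Field 𝕜] [LinearOrder 𝕜] [IsStrictOrderedRing 𝕜]
  [AddCommGroup M] [Module 𝕜 M] [AddCommGroup N] [Module 𝕜 N] {p : M →ₗ[𝕜] N →ₗ[𝕜] 𝕜}

variable (p) in
def fourierMotzkin [DecidableEq M] (A : Finset M) (u : N) : Finset M :=
  A.filter (fun a => 0 ≤ p a u) ∪
    (A.filter (fun a => 0 < p a u) ×ˢ A.filter (fun b => p b u < 0)).image
      (fun ab => p ab.1 u • ab.2 - p ab.2 u • ab.1)

theorem mem_sup_hull_singleton {C : PointedCone 𝕜 N} {u y : N} :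
    y ∈ C ⊔ hull 𝕜 {u} ↔ ∃ t : 𝕜, 0 ≤ t ∧ y - t • u ∈ C := by
  simp only [Submodule.mem_sup, Submodule.mem_span_singleton]
  constructor
  · rintro ⟨x, hx, _, ⟨t, rfl⟩, rfl⟩
    exact ⟨t, t.2, by simpa [Nonneg.mk_smul] using hx⟩
  · rintro ⟨t, ht, hy⟩
    exact ⟨_, hy, _, ⟨⟨t, ht⟩, rfl⟩, by simp [Nonneg.mk_smul]⟩

theorem mem_dual_fourierMotzkin [DecidableEq M] {A : Finset M} {u y : N} :
    y ∈ dual p (fourierMotzkin p A u) ↔ (∀ a ∈ A, 0 ≤ p a u → 0 ≤ p a y) ∧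
      ∀ a ∈ A, ∀ b ∈ A, 0 < p a u → p b u < 0 → 0 ≤ p a u * p b y - p b u * p a y := by
  simp only [mem_dual, fourierMotzkin, Finset.coe_union, Finset.coe_filter, Finset.coe_image,
    Set.mem_union, Set.mem_ofPred_eq, Set.mem_image, Finset.mem_coe, Finset.mem_product,
    Finset.mem_filter]
  constructor
  · intro h
    refine ⟨fun a ha hau => h (Or.inl ⟨ha, hau⟩), fun a ha b hb hau hbu => ?_⟩
    simpa using h (Or.inr ⟨(a, b), ⟨⟨ha, hau⟩, hb, hbu⟩, rfl⟩)
  · rintro ⟨h₁, h₂⟩ r (⟨ha, hau⟩ | ⟨⟨a, b⟩, ⟨⟨ha, hau⟩, hb, hbu⟩, rfl⟩)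
    · exact h₁ r ha hau
    · simpa using h₂ a ha b hb hau hbu

theorem dual_fourierMotzkin [DecidableEq M] (A : Finset M) (u : N) :
    dual p (fourierMotzkin p A u) = dual p A ⊔ hull 𝕜 {u} := by
  ext y
  rw [mem_dual_fourierMotzkin, mem_sup_hull_singleton]
  constructor
  · rintro ⟨h₁, h₂⟩
    -- `y - t • u ∈ dual p A` asks for `t ≥ 0` above every `p b y / p b u` with `p b u < 0` and
    -- below every `p a y / p a u` with `p a u > 0`; `h₁` and `h₂` say these bounds are compatible.
    set L := insert 0 ((A.filter (fun b => p b u < 0)).image (fun b => p b y / p b u))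
    set t := L.max' (Finset.insert_nonempty _ _)
    have hLt : ∀ l ∈ L, l ≤ t := fun l hl => L.le_max' l hl
    refine ⟨t, hLt 0 (Finset.mem_insert_self _ _), fun a ha => ?_⟩
    rw [map_sub, map_smul, smul_eq_mul, sub_nonneg]
    rcases lt_or_ge (p a u) 0 with hau | hau
    · have : p a y / p a u ≤ t := hLt _ (Finset.mem_insert_of_mem
        (Finset.mem_image_of_mem _ (Finset.mem_filter.2 ⟨ha, hau⟩)))
      rwa [div_le_iff_of_neg hau] at this
    rcases hau.eq_or_lt with hau | hau
    · rw [← hau, mul_zero]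
      exact h₁ a ha hau.le
    suffices t ≤ p a y / p a u by rwa [le_div_iff₀ hau] at this
    refine L.max'_le _ _ fun l hl => ?_
    rcases Finset.mem_insert.1 hl with rfl | hl
    · exact div_nonneg (h₁ a ha hau.le) hau.le
    obtain ⟨b, hb, rfl⟩ := Finset.mem_image.1 hl
    obtain ⟨hb, hbu⟩ := Finset.mem_filter.1 hb
    rw [← neg_div_neg_eq, div_le_div_iff₀ (neg_pos.2 hbu) hau]
    linarith [h₂ a ha b hb hau hbu]
  · rintro ⟨t, ht, hx⟩
    have hy : ∀ a ∈ A, t * p a u ≤ p a y := fun a ha => by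
      simpa [sub_nonneg] using hx ha
    refine ⟨fun a ha hau => le_trans (mul_nonneg ht hau) (hy a ha),
      fun a ha b hb hau hbu => ?_⟩
    nlinarith [hy a ha, hy b hb]

theorem FG.dualFG (hbot : (⊥ : PointedCone 𝕜 N).DualFG p) {C : PointedCone 𝕜 N} (hC : C.FG) :
    C.DualFG p := by
  classical
  obtain ⟨S, rfl⟩ := hC
  induction S using Finset.induction_on with
  | empty => simpa using hbot
  | insert u S _ ih =>
    obtain ⟨A, hA⟩ := ih
    refine ⟨fourierMotzkin p A u, ?_⟩
    rw [dual_fourierMotzkin, hA, Finset.coe_insert, Submodule.span_insert, sup_comm]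

theorem dual_flip_dual_of_finset (hbot' : (⊥ : PointedCone 𝕜 M).DualFG p.flip) (A : Finset M) :
    dual p.flip (dual p A) = hull 𝕜 A := by
  rw [← dual_hull (p := p) (s := (A : Set M)),
    DualFG.dual_flip_dual (FG.dualFG hbot' (Submodule.fg_span A.finite_toSet))]

theorem DualFG.fg (hbot : (⊥ : PointedCone 𝕜 N).DualFG p)
    (hbot' : (⊥ : PointedCone 𝕜 M).DualFG p.flip) {C : PointedCone 𝕜 N} (hC : C.DualFG p) :
    C.FG := by
  obtain ⟨A, rfl⟩ := hC
  obtain ⟨B, hB⟩ : (hull 𝕜 (A : Set M)).DualFG p.flip :=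
    FG.dualFG hbot' (Submodule.fg_span A.finite_toSet)
  refine ⟨B, ?_⟩
  rw [← dual_hull (p := p), ← hB, ← dual_hull (p := p.flip) (s := (B : Set N)),
    DualFG.dual_dual_flip (FG.dualFG hbot (Submodule.fg_span B.finite_toSet))]

theorem DualFG.bot_of_forall_eq_zero (S : Finset M) (hS : ∀ y, (∀ x ∈ S, p x y = 0) → y = 0) :
    (⊥ : PointedCone 𝕜 N).DualFG p := by
  classical
  refine ⟨S ∪ S.image Neg.neg, le_antisymm (fun y hy => hS y fun x hx => ?_) bot_le⟩
  simp only [mem_dual, Finset.coe_union, Finset.coe_image, Set.mem_union, Finset.mem_coe,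
    Set.mem_image] at hy
  have h₂ := hy (Or.inr ⟨x, hx, rfl⟩)
  simp only [map_neg, LinearMap.neg_apply, neg_nonneg] at h₂
  exact le_antisymm h₂ (hy (Or.inl hx))

section FiniteDimensional

variable [FiniteDimensional 𝕜 M]

variable (𝕜 M) in
theorem dualFG_bot_id :
    (⊥ : PointedCone 𝕜 M).DualFG (LinearMap.id : Module.Dual 𝕜 M →ₗ[𝕜] M →ₗ[𝕜] 𝕜) := by
  classical
  let b := Module.finBasis 𝕜 M
  refine DualFG.bot_of_forall_eq_zero (Finset.univ.image b.coord)
    fun y hy => b.ext_elem fun i => ?_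
  simpa using hy _ (Finset.mem_image_of_mem _ (Finset.mem_univ i))

variable (𝕜 M) in
theorem dualFG_bot_id_flip : (⊥ : PointedCone 𝕜 (Module.Dual 𝕜 M)).DualFG
    (LinearMap.id : Module.Dual 𝕜 M →ₗ[𝕜] M →ₗ[𝕜] 𝕜).flip := by
  classical
  let b := Module.finBasis 𝕜 M
  refine DualFG.bot_of_forall_eq_zero (Finset.univ.image b) fun f hf => b.ext fun i => ?_
  simpa using hf _ (Finset.mem_image_of_mem _ (Finset.mem_univ i))

end FiniteDimensional

end PointedCone

open PointedCone Module

theorem Submodule.finrank_inf_ker_add_one {K V : Type*} [Field K] [AddCommGroup V] [Module K V]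
    {W : Submodule K V} [FiniteDimensional K W] {m : V →ₗ[K] K} {w : V} (hw : w ∈ W)
    (hmw : m w ≠ 0) : finrank K ↥(W ⊓ LinearMap.ker m) + 1 = finrank K W := by
  have hf : m.domRestrict W ≠ 0 := fun h => hmw (by simpa using LinearMap.congr_fun h ⟨w, hw⟩)
  rw [← Module.Dual.finrank_ker_add_one_of_ne_zero hf, LinearMap.ker_domRestrict,
    ← Submodule.map_comap_subtype, Submodule.finrank_map_subtype_eq]

section Cones

variable {V : Type*} [AddCommGroup V] [Module ℚ V]

theorem coneGen_eq_hull (T : Set V) : ConeGen T = hull ℚ T := by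
  ext x
  constructor
  · rintro ⟨s, c, hs, hc, rfl⟩
    exact Submodule.sum_mem _ fun v hv => Submodule.smul_mem _ ⟨c v, hc v⟩ (subset_hull (hs hv))
  · intro hx
    obtain ⟨c, hcT, hc, rfl⟩ := mem_hull_set.1 hx
    exact ⟨c.support, c, hcT, hc, rfl⟩

theorem subset_coneGen (T : Set V) : T ⊆ ConeGen T := by
  rw [coneGen_eq_hull]; exact subset_hull

theorem coneGen_mono {T T' : Set V} (h : T ⊆ T') : ConeGen T ⊆ ConeGen T' := by
  simp only [coneGen_eq_hull, SetLike.coe_subset_coe]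
  exact Submodule.span_mono h

theorem coneGen_subset_span (T : Set V) : ConeGen T ⊆ Submodule.span ℚ T := by
  rw [coneGen_eq_hull]; exact hull_le_span ℚ T

theorem nonneg_of_mem_coneGen {T : Set V} {m : V →ₗ[ℚ] ℚ} (hm : ∀ v ∈ T, 0 ≤ m v) {x : V}
    (hx : x ∈ ConeGen T) : 0 ≤ m x := by
  have : m ∈ dual (LinearMap.id : Dual ℚ V →ₗ[ℚ] V →ₗ[ℚ] ℚ).flip (hull ℚ T) := by
    rw [dual_hull]; exact fun v hv => hm v hv
  rw [coneGen_eq_hull] at hx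
  exact this hx

theorem eq_zero_of_mem_span {T : Set V} {m : V →ₗ[ℚ] ℚ} (hm : ∀ v ∈ T, m v = 0) {x : V}
    (hx : x ∈ Submodule.span ℚ T) : m x = 0 :=
  Submodule.span_le.2 (fun v hv => LinearMap.mem_ker.2 (hm v hv)) hx

theorem eq_zero_of_mem_coneGen {T : Set V} {m : V →ₗ[ℚ] ℚ} (hm : ∀ v ∈ T, m v = 0) {x : V}
    (hx : x ∈ ConeGen T) : m x = 0 :=
  eq_zero_of_mem_span hm (coneGen_subset_span T hx)

theorem coneDim_coneGen (T : Set V) : coneDim (ConeGen T) = finrank ℚ (Submodule.span ℚ T) := by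
  rw [coneDim, le_antisymm (Submodule.span_le.2 (coneGen_subset_span T))
    (Submodule.span_mono (subset_coneGen T))]

theorem coneGen_inter_ker {T : Set V} {m : V →ₗ[ℚ] ℚ} (hm : ∀ v ∈ T, 0 ≤ m v) :
    ConeGen T ∩ {x | m x = 0} = ConeGen (T ∩ {x | m x = 0}) := by
  classical
  refine Set.Subset.antisymm ?_ fun x hx =>
    ⟨coneGen_mono Set.inter_subset_left hx, eq_zero_of_mem_coneGen (fun v hv => hv.2) hx⟩
  rintro _ ⟨⟨s, c, hs, hc, rfl⟩, hx⟩
  have hterm : ∀ v ∈ s, c v * m v = 0 := by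
    refine (Finset.sum_eq_zero_iff_of_nonneg fun v hv => mul_nonneg (hc v) (hm v (hs hv))).1 ?_
    simpa using hx
  refine ⟨s.filter (fun v => m v = 0), c, fun v hv => ?_, hc, ?_⟩
  · rw [Finset.coe_filter] at hv
    exact ⟨hs hv.1, hv.2⟩
  · rw [Finset.sum_filter]
    refine Finset.sum_congr rfl fun v hv => ?_
    split_ifs with h
    · rfl
    · rw [(mul_eq_zero.1 (hterm v hv)).resolve_right h, zero_smul]

theorem inter_inter_ker_add {σ σ' : Set V} {m m' : V →ₗ[ℚ] ℚ} (hm : ∀ x ∈ σ, 0 ≤ m x)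
    (hm' : ∀ x ∈ σ', 0 ≤ m' x) :
    σ ∩ σ' ∩ {x | (m + m') x = 0} = (σ ∩ {x | m x = 0}) ∩ (σ' ∩ {x | m' x = 0}) := by
  ext x
  simp only [Set.mem_inter_iff, Set.mem_ofPred_eq, LinearMap.add_apply]
  constructor
  · rintro ⟨⟨hx, hx'⟩, h⟩
    have := hm x hx
    have := hm' x hx'
    exact ⟨⟨hx, by linarith⟩, hx', by linarith⟩
  · rintro ⟨⟨hx, h⟩, hx', h'⟩
    exact ⟨⟨hx, hx'⟩, by rw [h, h', add_zero]⟩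

theorem IsFace.inter {σ σ' τ τ' : Set V} (h : IsFace σ τ) (h' : IsFace σ' τ') :
    IsFace (σ ∩ σ') (τ ∩ τ') := by
  obtain ⟨m, hm, rfl⟩ := h
  obtain ⟨m', hm', rfl⟩ := h'
  exact ⟨m + m', fun x hx => add_nonneg (hm x hx.1) (hm' x hx.2),
    (inter_inter_ker_add hm hm').symm⟩

/-- Tilting `m` towards `μ` until the first generator on which `μ < 0` enters the kernel. -/
theorem exists_pos_add_smul_nonneg {T : Finset V} {m μ : V →ₗ[ℚ] ℚ} (hm : ∀ v ∈ T, 0 ≤ m v)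
    (hμ : ∀ v ∈ T, m v = 0 → μ v = 0) {v₀ : V} (hv₀ : v₀ ∈ T) (hμv₀ : μ v₀ < 0) :
    ∃ t : ℚ, 0 < t ∧ (∀ v ∈ T, 0 ≤ (m + t • μ) v) ∧ ∃ v ∈ T, m v ≠ 0 ∧ (m + t • μ) v = 0 := by
  classical
  obtain ⟨v₁, hv₁, hmin⟩ := Finset.exists_min_image (T.filter (μ · < 0)) (fun v => m v / -μ v)
    ⟨v₀, Finset.mem_filter.2 ⟨hv₀, hμv₀⟩⟩
  obtain ⟨hv₁T, hμv₁⟩ := Finset.mem_filter.1 hv₁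
  have hmv₁ : 0 < m v₁ := (hm v₁ hv₁T).lt_of_ne fun h => hμv₁.ne (hμ v₁ hv₁T h.symm)
  have ht : 0 < m v₁ / -μ v₁ := div_pos hmv₁ (neg_pos.2 hμv₁)
  refine ⟨_, ht, fun v hv => ?_, v₁, hv₁T, hmv₁.ne', ?_⟩
  · simp only [LinearMap.add_apply, LinearMap.smul_apply, smul_eq_mul]
    rcases le_or_gt 0 (μ v) with hμv | hμv
    · exact add_nonneg (hm v hv) (mul_nonneg ht.le hμv)
    · have := hmin v (Finset.mem_filter.2 ⟨hv, hμv⟩)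
      rw [le_div_iff₀ (neg_pos.2 hμv)] at this
      linarith
  · have := hμv₁.ne
    simp only [LinearMap.add_apply, LinearMap.smul_apply, smul_eq_mul]
    field_simp
    ring

/-- `hmax` says that no proper face of `ConeGen T` strictly contains the face cut out by `m`. -/
theorem span_inter_ker_eq_of_maximal {T : Finset V} {m : V →ₗ[ℚ] ℚ} (hm : ∀ v ∈ T, 0 ≤ m v)
    (hmax : ∀ m' : V →ₗ[ℚ] ℚ, (∀ v ∈ T, 0 ≤ m' v) → (∀ v ∈ T, m v = 0 → m' v = 0) →
      (∃ v ∈ T, m v ≠ 0 ∧ m' v = 0) → ∀ v ∈ T, m' v = 0) :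
    Submodule.span ℚ (↑T ∩ {x | m x = 0}) = Submodule.span ℚ ↑T ⊓ LinearMap.ker m := by
  set U := Submodule.span ℚ (↑T ∩ {x | m x = 0})
  refine le_antisymm (le_inf (Submodule.span_mono Set.inter_subset_left)
    (Submodule.span_le.2 fun v hv => hv.2)) fun w hw => ?_
  by_contra hwU
  obtain ⟨μ₀, hμ₀w, hμ₀U⟩ := Submodule.exists_dual_map_eq_bot_of_notMem hwU inferInstance
  have hμ₀U : ∀ u ∈ U, μ₀ u = 0 := fun u hu =>
    (Submodule.mem_bot ℚ).1 (hμ₀U ▸ Submodule.mem_map_of_mem hu)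
  obtain ⟨v₀, hv₀, hμ₀v₀⟩ : ∃ v ∈ T, μ₀ v ≠ 0 := by
    by_contra! h
    exact hμ₀w (eq_zero_of_mem_span h hw.1)
  obtain ⟨μ, hμw, hμU, hμv₀⟩ : ∃ μ : V →ₗ[ℚ] ℚ, μ w ≠ 0 ∧ (∀ u ∈ U, μ u = 0) ∧ μ v₀ < 0 := by
    rcases hμ₀v₀.lt_or_gt with h | h
    · exact ⟨μ₀, hμ₀w, hμ₀U, h⟩
    · exact ⟨-μ₀, by simpa using hμ₀w, fun u hu => by simp [hμ₀U u hu], by simpa using h⟩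
  have hμT : ∀ v ∈ T, m v = 0 → μ v = 0 := fun v hv hmv =>
    hμU v (Submodule.subset_span ⟨hv, hmv⟩)
  obtain ⟨t, ht, hnn, hnew⟩ := exists_pos_add_smul_nonneg hm hμT hv₀ hμv₀
  have hvan := hmax (m + t • μ) hnn (fun v hv hmv => by simp [hmv, hμT v hv hmv]) hnew
  have hw0 := eq_zero_of_mem_span hvan hw.1
  simp only [LinearMap.add_apply, LinearMap.smul_apply, smul_eq_mul,
    LinearMap.mem_ker.1 hw.2, zero_add, mul_eq_zero] at hw0
  exact hw0.elim ht.ne' hμw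

theorem IsFace.exists_isFacet {T : Finset V} {g : Set V} (hg : IsFace (ConeGen ↑T) g)
    (hne : g ≠ ConeGen ↑T) : ∃ f, IsFacet (ConeGen ↑T) f ∧ IsFace f g := by
  obtain ⟨mg, hmg, rfl⟩ := hg
  have hmgT : ∀ v ∈ T, 0 ≤ mg v := fun v hv => hmg v (subset_coneGen _ hv)
  set P : Set (V →ₗ[ℚ] ℚ) :=
    {m | (∀ v ∈ T, 0 ≤ m v) ∧ (∃ v ∈ T, m v ≠ 0) ∧ ∀ v ∈ T, mg v = 0 → m v = 0}
  have hmgP : mg ∈ P := by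
    refine ⟨hmgT, ?_, fun _ _ h => h⟩
    by_contra! h
    exact hne (Set.inter_eq_left.2 fun x hx => eq_zero_of_mem_coneGen h hx)
  have hfin : ((fun m : V →ₗ[ℚ] ℚ => (↑T ∩ {x | m x = 0} : Set V)) '' P).Finite :=
    T.finite_toSet.finite_subsets.subset <| by
      rintro _ ⟨m, -, rfl⟩
      exact Set.inter_subset_left
  obtain ⟨m, ⟨hm, ⟨v₀, hv₀, hmv₀⟩, hmgm⟩, hmax⟩ := hfin.exists_maximalFor' _ P ⟨mg, hmgP⟩
  have hspan := span_inter_ker_eq_of_maximal hm fun m' hm' hker ⟨v, hv, hmv, hm'v⟩ => by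
    by_contra! h
    have := hmax (j := m') ⟨hm', h, fun v hv hv' => hker v hv (hmgm v hv hv')⟩
      fun x hx => ⟨hx.1, hker x hx.1 hx.2⟩
    exact hmv (this ⟨hv, hm'v⟩).2
  refine ⟨ConeGen ↑T ∩ {x | m x = 0}, ⟨⟨m, fun x => nonneg_of_mem_coneGen hm, rfl⟩, ?_⟩,
    mg, fun x hx => hmg x hx.1, ?_⟩
  · rw [coneGen_inter_ker hm, coneDim_coneGen, coneDim_coneGen, hspan]
    exact Submodule.finrank_inf_ker_add_one (Submodule.subset_span hv₀) hmv₀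
  · have hsub : ConeGen ↑T ∩ {x | mg x = 0} ⊆ {x | m x = 0} := by
      rw [coneGen_inter_ker hmgT]
      exact fun x hx => eq_zero_of_mem_coneGen (fun v hv => hmgm v hv.1 hv.2) hx
    rw [Set.inter_right_comm, Set.inter_eq_left.2 hsub]

theorem IsQuasifan.mem_of_isFace {F : Set (Set V)} (hF : IsQuasifan F) {σ g : Set V}
    (hσ : σ ∈ F) (hg : IsFace σ g) : g ∈ F := by
  induction h : coneDim σ using Nat.strong_induction_on generalizing σ with
  | _ k ih =>
    by_cases hgσ : g = σ
    · exact hgσ ▸ hσ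
    obtain ⟨T, rfl⟩ := hF.2.1 σ hσ
    obtain ⟨f, hf, hfg⟩ := hg.exists_isFacet hgσ
    exact ih _ (by have := hf.2; omega) (hF.2.2.1 _ hσ f hf) hfg rfl

end Cones

section FiniteDimensional

variable {V : Type*} [AddCommGroup V] [Module ℚ V] [FiniteDimensional ℚ V]

local notation "evalPairing" => (LinearMap.id : Dual ℚ V →ₗ[ℚ] V →ₗ[ℚ] ℚ)

theorem isPolyCone_iff_exists_dual {σ : Set V} :
    IsPolyCone σ ↔ ∃ B : Finset (Dual ℚ V), σ = dual evalPairing B := by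
  constructor
  · rintro ⟨T, rfl⟩
    obtain ⟨B, hB⟩ := FG.dualFG (dualFG_bot_id ℚ V) (Submodule.fg_span T.finite_toSet)
    exact ⟨B, by rw [coneGen_eq_hull, hB]⟩
  · rintro ⟨B, rfl⟩
    obtain ⟨T, hT⟩ :=
      DualFG.fg (dualFG_bot_id ℚ V) (dualFG_bot_id_flip ℚ V) ⟨B, rfl⟩
    exact ⟨T, by rw [coneGen_eq_hull]; exact congrArg _ hT.symm⟩

theorem IsPolyCone.inter {σ σ' : Set V} (hσ : IsPolyCone σ) (hσ' : IsPolyCone σ') :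
    IsPolyCone (σ ∩ σ') := by
  classical
  obtain ⟨B, rfl⟩ := isPolyCone_iff_exists_dual.1 hσ
  obtain ⟨B', rfl⟩ := isPolyCone_iff_exists_dual.1 hσ'
  exact isPolyCone_iff_exists_dual.2
    ⟨B ∪ B', by rw [Finset.coe_union, dual_union, Submodule.coe_inf]⟩

theorem exists_add_of_nonneg_on_inter {σ σ' : Set V} (hσ : IsPolyCone σ) (hσ' : IsPolyCone σ')
    {m : V →ₗ[ℚ] ℚ} (hm : ∀ x ∈ σ ∩ σ', 0 ≤ m x) :
    ∃ m₁ m₂ : V →ₗ[ℚ] ℚ, m = m₁ + m₂ ∧ (∀ x ∈ σ, 0 ≤ m₁ x) ∧ ∀ x ∈ σ', 0 ≤ m₂ x := by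
  classical
  obtain ⟨B, rfl⟩ := isPolyCone_iff_exists_dual.1 hσ
  obtain ⟨B', rfl⟩ := isPolyCone_iff_exists_dual.1 hσ'
  have : m ∈ dual (LinearMap.flip evalPairing) (dual evalPairing ↑(B ∪ B')) := by
    rw [Finset.coe_union, dual_union]
    exact fun x hx => hm x hx
  rw [dual_flip_dual_of_finset (dualFG_bot_id_flip ℚ V), Finset.coe_union] at this
  obtain ⟨m₁, hm₁, m₂, hm₂, rfl⟩ := Submodule.mem_sup.1 ((Submodule.span_union _ _).le this)
  refine ⟨m₁, m₂, rfl, fun x hx => ?_, fun x hx => ?_⟩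
  · rw [SetLike.mem_coe, ← dual_hull] at hx
    exact hx hm₁
  · rw [SetLike.mem_coe, ← dual_hull] at hx
    exact hx hm₂

theorem IsFace.exists_eq_inter {σ σ' υ : Set V} (hσ : IsPolyCone σ) (hσ' : IsPolyCone σ')
    (hυ : IsFace (σ ∩ σ') υ) : ∃ ρ ρ', IsFace σ ρ ∧ IsFace σ' ρ' ∧ υ = ρ ∩ ρ' := by
  obtain ⟨m, hm, rfl⟩ := hυ
  obtain ⟨m₁, m₂, rfl, h₁, h₂⟩ := exists_add_of_nonneg_on_inter hσ hσ' hm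
  exact ⟨_, _, ⟨m₁, h₁, rfl⟩, ⟨m₂, h₂, rfl⟩, inter_inter_ker_add h₁ h₂⟩

theorem IsQuasifan.image2_inter {F F' : Set (Set V)} (hF : IsQuasifan F) (hF' : IsQuasifan F') :
    IsQuasifan (Set.image2 (· ∩ ·) F F') := by
  refine ⟨hF.1.image2 _ hF'.1, ?_, ?_, ?_⟩
  · rintro _ ⟨σ, hσ, σ', hσ', rfl⟩
    exact (hF.2.1 σ hσ).inter (hF'.2.1 σ' hσ')
  · rintro _ ⟨σ, hσ, σ', hσ', rfl⟩ τ hτ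
    obtain ⟨ρ, ρ', hρ, hρ', rfl⟩ := hτ.1.exists_eq_inter (hF.2.1 σ hσ) (hF'.2.1 σ' hσ')
    exact ⟨ρ, hF.mem_of_isFace hσ hρ, ρ', hF'.mem_of_isFace hσ' hρ', rfl⟩
  · rintro _ ⟨σ, hσ, σ', hσ', rfl⟩ _ ⟨ρ, hρ, ρ', hρ', rfl⟩
    obtain ⟨h₁, h₂⟩ := hF.2.2.2 σ hσ ρ hρ
    obtain ⟨h₁', h₂'⟩ := hF'.2.2.2 σ' hσ' ρ' hρ'
    rw [Set.inter_inter_inter_comm]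
    exact ⟨h₁.inter h₁', h₂.inter h₂'⟩

end FiniteDimensional

theorem exists_maximal_of_maximal_image2_inter {α : Type*} {F F' : Set (Set α)} (hF : F.Finite)
    (hF' : F'.Finite) {τ : Set α}
    (hτ : Maximal (· ∈ Set.image2 (· ∩ ·) F F') τ) :
    ∃ σ σ', Maximal (· ∈ F) σ ∧ Maximal (· ∈ F') σ' ∧ τ = σ ∩ σ' := by
  obtain ⟨σ₀, hσ₀, σ₀', hσ₀', rfl⟩ := hτ.1
  obtain ⟨σ, hσ₀σ, hσ⟩ := hF.exists_le_maximal hσ₀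
  obtain ⟨σ', hσ₀σ', hσ'⟩ := hF'.exists_le_maximal hσ₀'
  exact ⟨σ, σ', hσ, hσ', hτ.eq_of_le (Set.mem_image2_of_mem hσ.1 hσ'.1)
    (Set.inter_subset_inter hσ₀σ hσ₀σ')⟩

section Convexity

variable {V : Type*} [AddCommGroup V] [Module ℚ V] {F F' : Set (Set V)} {Ψ Ψ' : V → ℚ}

theorem IsPLOn.image2_inter (hΨ : IsPLOn F Ψ) (hΨ' : IsPLOn F' Ψ') :
    IsPLOn (Set.image2 (· ∩ ·) F F') (fun x => Ψ x + Ψ' x) := by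
  rintro _ ⟨σ, hσ, σ', hσ', rfl⟩
  obtain ⟨ℓ, hℓ⟩ := hΨ σ hσ
  obtain ⟨ℓ', hℓ'⟩ := hΨ' σ' hσ'
  exact ⟨ℓ + ℓ', fun x hx => by simp [hℓ x hx.1, hℓ' x hx.2]⟩

theorem IsStrictlyConvexPLOn.image2_inter (hF : F.Finite) (hF' : F'.Finite)
    (hΨ : IsStrictlyConvexPLOn F Ψ) (hΨ' : IsStrictlyConvexPLOn F' Ψ') :
    IsStrictlyConvexPLOn (Set.image2 (· ∩ ·) F F') (fun x => Ψ x + Ψ' x) := by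
  refine ⟨hΨ.1.image2_inter hΨ'.1, fun τ _ hτ => ?_⟩
  obtain ⟨σ, σ', hσ, hσ', rfl⟩ := exists_maximal_of_maximal_image2_inter hF hF' hτ
  obtain ⟨ℓ, hℓ, hlt⟩ := hΨ.2 σ hσ.1 hσ
  obtain ⟨ℓ', hℓ', hlt'⟩ := hΨ'.2 σ' hσ'.1 hσ'
  have hle : ∀ x, ℓ x ≤ Ψ x := fun x => by
    by_cases hx : x ∈ σ
    exacts [(hℓ x hx).ge, (hlt x hx).le]
  have hle' : ∀ x, ℓ' x ≤ Ψ' x := fun x => by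
    by_cases hx : x ∈ σ'
    exacts [(hℓ' x hx).ge, (hlt' x hx).le]
  refine ⟨ℓ + ℓ', fun x hx => by simp [hℓ x hx.1, hℓ' x hx.2], fun x hx => ?_⟩
  simp only [LinearMap.add_apply]
  rcases not_and_or.1 hx with h | h
  · linarith [hlt x h, hle' x]
  · linarith [hlt' x h, hle x]

end Convexity

theorem intersection_of_projective_quasifans_general {n : ℕ}
    (F F' : Set (Set (Fin n → ℚ))) (Ψ Ψ' : (Fin n → ℚ) → ℚ)
    (hF : IsQuasifan F) (hF' : IsQuasifan F')
    (hΨ : IsStrictlyConvexPLOn F Ψ) (hΨ' : IsStrictlyConvexPLOn F' Ψ') :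
    (∃ lam : ℚ, 0 < lam ∧
      IsStrictlyConvexPLOn {τ | ∃ σ ∈ F, ∃ σ' ∈ F', τ = σ ∩ σ'}
        (fun x => Ψ x + lam * Ψ' x)) ∧
    IsQuasifan {τ | ∃ σ ∈ F, ∃ σ' ∈ F', τ = σ ∩ σ'} ∧
    IsProjectiveFan {τ | ∃ σ ∈ F, ∃ σ' ∈ F', τ = σ ∩ σ'} := by
  have hinter : {τ | ∃ σ ∈ F, ∃ σ' ∈ F', τ = σ ∩ σ'} = Set.image2 (· ∩ ·) F F' := by
    ext τ
    simp only [Set.mem_ofPred_eq, Set.mem_image2, eq_comm]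
  have hstrict := hΨ.image2_inter hF.1 hF'.1 hΨ'
  rw [hinter]
  exact ⟨⟨1, one_pos, by simpa only [one_mul] using hstrict⟩, hF.image2_inter hF', _, hstrict⟩

/-- If `Ψ`, `Ψ'` are strictly convex piecewise linear functions adapted to complete
quasifans `F`, `F'` in `ℚ^n`, then for a suitable positive scaling `Ψ + λ Ψ'` is strictly
convex with respect to the intersection quasifan; in particular, the intersection of two
finite projective quasifans is a projective quasifan. -/
theorem intersection_of_projective_quasifans {n : ℕ}
    (F F' : Set (Set (Fin n → ℚ))) (Ψ Ψ' : (Fin n → ℚ) → ℚ)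
    (hF : IsQuasifan F) (hF' : IsQuasifan F')
    (hc : IsCompleteFan F) (hc' : IsCompleteFan F')
    (hΨ : IsStrictlyConvexPLOn F Ψ) (hΨ' : IsStrictlyConvexPLOn F' Ψ') :
    (∃ lam : ℚ, 0 < lam ∧
      IsStrictlyConvexPLOn {τ | ∃ σ ∈ F, ∃ σ' ∈ F', τ = σ ∩ σ'}
        (fun x => Ψ x + lam * Ψ' x)) ∧
    IsQuasifan {τ | ∃ σ ∈ F, ∃ σ' ∈ F', τ = σ ∩ σ'} ∧
    IsProjectiveFan {τ | ∃ σ ∈ F, ∃ σ' ∈ F', τ = σ ∩ σ'} :=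
  intersection_of_projective_quasifans_general F F' Ψ Ψ' hF hF' hΨ hΨ'
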